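/- arXiv:1503.00049 — 2 statements merged into one kernel-verified Lean document; each statement's English description precedes it below -/
import Mathlib

section
/- (Interpolation lemma) Let S be a binary string (over the alphabet {0,1}), and let S1 and S2 be two factors of S with |S1| = |S2| = ℓ. Set i = |S1|_1 and j = |S2|_1 and suppose j > i + 1. Then there exists another factor S3 of S with |S3| = ℓ and i < |S3|_1 < j. -/
/-! Sliding a window of length ℓ one position at a time from the occurrence of `S1` to that of
`S2` changes its number of 1s by at most one per step, so by a discrete intermediate value
argument some window in between has exactly `|S1|₁ + 1` ones. -/

theorem exists_eq_of_le_succ {α : Type*} [LinearOrder α] [SuccOrder α] {f : ℕ → α} {a b : ℕ}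
    {t : α} (hab : a ≤ b) (hf : ∀ k, a ≤ k → k < b → f (k + 1) ≤ Order.succ (f k))
    (ha : f a ≤ t) (hb : t ≤ f b) : ∃ k ∈ Set.Icc a b, f k = t := by
  induction b, hab using Nat.le_induction with
  | base => exact ⟨a, Set.left_mem_Icc.2 le_rfl, le_antisymm ha hb⟩
  | succ b hab ih =>
    by_cases htb : t ≤ f b
    · obtain ⟨k, hk, hkt⟩ := ih (fun k hak hkb => hf k hak (by omega)) htb
      exact ⟨k, ⟨hk.1, hk.2.trans b.le_succ⟩, hkt⟩
    · have : f (b + 1) ≤ t :=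
        (hf b hab (by omega)).trans (Order.succ_le_of_lt (not_le.1 htb))
      exact ⟨b + 1, ⟨by omega, le_rfl⟩, le_antisymm this hb⟩

theorem exists_eq_of_pred_le {α : Type*} [LinearOrder α] [PredOrder α] {f : ℕ → α} {a b : ℕ}
    {t : α} (hab : a ≤ b) (hf : ∀ k, a ≤ k → k < b → Order.pred (f k) ≤ f (k + 1))
    (ha : t ≤ f a) (hb : f b ≤ t) : ∃ k ∈ Set.Icc a b, f k = t :=
  exists_eq_of_le_succ (α := αᵒᵈ) (f := OrderDual.toDual ∘ f) hab hf ha hb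

namespace List

theorem IsInfix.exists_eq_take_drop {α : Type*} {l₁ l₂ : List α} (h : l₁ <:+: l₂) :
    ∃ k, k + l₁.length ≤ l₂.length ∧ (l₂.drop k).take l₁.length = l₁ := by
  obtain ⟨s, t, rfl⟩ := h
  refine ⟨s.length, by simp, ?_⟩
  rw [append_assoc, drop_left, take_left]

variable {α : Type*} [BEq α]

theorem count_take_tail_le (l : List α) (a : α) (n : ℕ) :
    (l.tail.take n).count a ≤ (l.take n).count a + 1 := by
  rcases l with _ | ⟨x, l⟩
  · simp
  rcases n with _ | n
  · simp
  calc (l.take (n + 1)).count a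
      ≤ (l.take n).count a + 1 := by
        rw [take_add_one, count_append]
        have : l[n]?.toList.count a ≤ 1 := count_le_length.trans (by cases l[n]? <;> simp)
        omega
    _ ≤ ((x :: l).take (n + 1)).count a + 1 := by
        rw [take_succ_cons]; exact Nat.add_le_add_right (count_le_count_cons ..) 1

theorem count_take_le_count_take_tail (l : List α) (a : α) (n : ℕ) :
    (l.take n).count a ≤ (l.tail.take n).count a + 1 := by
  rcases l with _ | ⟨x, l⟩
  · simp
  rcases n with _ | n
  · simp
  calc ((x :: l).take (n + 1)).count a
      ≤ (l.take n).count a + 1 := by rw [take_succ_cons, count_cons]; split <;> omega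
    _ ≤ (l.take (n + 1)).count a + 1 :=
        Nat.add_le_add_right ((take_prefix_take_left (by omega)).count_le a) 1

theorem exists_infix_length_eq_count_eq {l u v : List α} (a : α) (hu : u <:+: l)
    (hv : v <:+: l) (huv : u.length = v.length) {t : ℕ} (hut : u.count a ≤ t)
    (htv : t ≤ v.count a) : ∃ w, w <:+: l ∧ w.length = u.length ∧ w.count a = t := by
  obtain ⟨p, hp, hpu⟩ := hu.exists_eq_take_drop
  obtain ⟨q, hq, hqv⟩ := hv.exists_eq_take_drop
  set n := u.length
  rw [← huv] at hq hqv
  set f : ℕ → ℕ := fun k => ((l.drop k).take n).count a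
  have hfp : f p = u.count a := congrArg (count a) hpu
  have hfq : f q = v.count a := congrArg (count a) hqv
  have hup (k : ℕ) : f (k + 1) ≤ f k + 1 := by
    simpa [f, tail_drop] using count_take_tail_le (l.drop k) a n
  have hdown (k : ℕ) : f k ≤ f (k + 1) + 1 := by
    simpa [f, tail_drop] using count_take_le_count_take_tail (l.drop k) a n
  suffices ∃ k ∈ Set.Icc (min p q) (max p q), f k = t by
    obtain ⟨k, ⟨-, hkq⟩, hkt⟩ := this
    refine ⟨(l.drop k).take n, (take_prefix n _).isInfix.trans (drop_suffix k l).isInfix,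
      ?_, hkt⟩
    simp only [length_take, length_drop]
    omega
  rcases le_total p q with hpq | hqp
  · simpa [hpq] using exists_eq_of_le_succ hpq (fun k _ _ => hup k) (hfp ▸ hut) (hfq ▸ htv)
  · simpa [hqp] using exists_eq_of_pred_le hqp (fun k _ _ => by simpa using hdown k)
      (hfq ▸ htv) (hfp ▸ hut)

end List

/-- Interpolation lemma: if `S1` and `S2` are factors of a binary string `S`,
both of length `ℓ`, with `|S2|₁ > |S1|₁ + 1`, then there is another factor `S3`
of `S` of length `ℓ` with `|S1|₁ < |S3|₁ < |S2|₁`. -/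
theorem interpolation_lemma (S S1 S2 : List Bool) (ℓ : ℕ)
    (h1 : S1 <:+: S) (h2 : S2 <:+: S)
    (hl1 : S1.length = ℓ) (hl2 : S2.length = ℓ)
    (hij : S2.count true > S1.count true + 1) :
    ∃ S3 : List Bool, S3 <:+: S ∧ S3.length = ℓ ∧
      S1.count true < S3.count true ∧ S3.count true < S2.count true := by
  obtain ⟨S3, h3, hl3, hc3⟩ := List.exists_infix_length_eq_count_eq true h1 h2
    (hl1.trans hl2.symm) (Nat.le_succ _) hij.le
  exact ⟨S3, h3, hl3.trans hl1, by omega, by omega⟩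
end

section
/- Let A and B be binary strings (over the alphabet {0,1}), each of length n, and suppose A and B have at least one common abelian factor. Then the length of a longest common abelian factor (LCAF) of A and B equals the largest ℓ with 1 ≤ ℓ ≤ n such that the integer intervals [minOne(A, ℓ), maxOne(A, ℓ)] and [minOne(B, ℓ), maxOne(B, ℓ)] have nonempty intersection, i.e., such that maxOne(B, ℓ) ≥ minOne(A, ℓ) and maxOne(A, ℓ) ≥ minOne(B, ℓ). -/
/-- `A` and `B` have a common abelian factor of length `ℓ`: there exist factors
`u` of `A` and `v` of `B`, both of length `ℓ`, with equal Parikh vectors. -/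
def HasCommonAbelianFactor (A B : List Bool) (ℓ : ℕ) : Prop :=
  ∃ u v : List Bool, u <:+: A ∧ v <:+: B ∧ u.length = ℓ ∧ v.length = ℓ ∧
    ∀ c : Bool, u.count c = v.count c

/-- The set of numbers of 1's of length-`ℓ` factors of the binary string `S`. -/
def factorOnesCounts (S : List Bool) (ℓ : ℕ) : Set ℕ :=
  {k | ∃ w : List Bool, w <:+: S ∧ w.length = ℓ ∧ w.count true = k}

/-- `minOne S ℓ`: the minimum number of 1's over all length-`ℓ` factors of `S`. -/
noncomputable def minOne (S : List Bool) (ℓ : ℕ) : ℕ := sInf (factorOnesCounts S ℓ)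

/-- `maxOne S ℓ`: the maximum number of 1's over all length-`ℓ` factors of `S`. -/
noncomputable def maxOne (S : List Bool) (ℓ : ℕ) : ℕ := sSup (factorOnesCounts S ℓ)

/-! For a fixed length `ℓ`, sliding a window of length `ℓ` one position to the right changes its
number of 1's by at most one, so by a discrete intermediate value argument the 1-counts of the
length-`ℓ` factors of a binary string fill the whole interval `[minOne S ℓ, maxOne S ℓ]`.
Over a binary alphabet a Parikh vector is determined by the length and the number of 1's, hence
`A` and `B` have a common abelian factor of length `ℓ` exactly when these two intervals meet. -/

theorem Nat.exists_eq_of_mem_uIcc_of_step_le_one {f : ℕ → ℕ}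
    (hf : ∀ i, f (i + 1) ≤ f i + 1 ∧ f i ≤ f (i + 1) + 1) {i j k : ℕ}
    (hk : k ∈ Set.uIcc (f i) (f j)) : ∃ m ∈ Set.uIcc i j, f m = k := by
  wlog hij : i ≤ j generalizing i j
  · rw [Set.uIcc_comm] at hk ⊢
    exact this hk (by omega)
  induction j, hij using Nat.le_induction with
  | base => exact ⟨i, by simp, by rw [Set.mem_uIcc] at hk; omega⟩
  | succ j hij ih =>
    by_cases hkj : k ∈ Set.uIcc (f i) (f j)
    · obtain ⟨m, hm, hfm⟩ := ih hkj
      exact ⟨m, Set.uIcc_subset_uIcc_left (by rw [Set.mem_uIcc]; omega) hm, hfm⟩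
    · refine ⟨j + 1, Set.right_mem_uIcc, ?_⟩
      rw [Set.mem_uIcc] at hk hkj
      have := hf j
      omega

namespace List

variable {α : Type*} (l : List α)

theorem take_drop_infix (ℓ i : ℕ) : (l.drop i).take ℓ <:+: l :=
  (take_prefix ℓ _).isInfix.trans (drop_suffix i l).isInfix

theorem IsInfix.exists_eq_take_drop_s4 {u : List α} (h : u <:+: l) :
    ∃ i, i + u.length ≤ l.length ∧ (l.drop i).take u.length = u := by
  obtain ⟨s, t, rfl⟩ := h
  refine ⟨s.length, by simp, ?_⟩
  rw [append_assoc, drop_left, take_left]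

variable [BEq α] (a : α)

theorem count_take_add_one_le (i : ℕ) :
    (l.take (i + 1)).count a ≤ (l.take i).count a + 1 := by
  rw [take_add_one, count_append]
  have : l[i]?.toList.length ≤ 1 := by cases l[i]? <;> simp
  have := count_le_length (a := a) (l := l[i]?.toList)
  omega

theorem count_take_drop_step (ℓ i : ℕ) :
    ((l.drop (i + 1)).take ℓ).count a ≤ ((l.drop i).take ℓ).count a + 1 ∧
      ((l.drop i).take ℓ).count a ≤ ((l.drop (i + 1)).take ℓ).count a + 1 := by
  -- both windows are differences of prefix counts, which grow by at most one per step
  have hi : (l.take (i + ℓ)).count a = (l.take i).count a + ((l.drop i).take ℓ).count a := by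
    rw [take_add, count_append]
  have hi' : (l.take (i + ℓ + 1)).count a =
      (l.take (i + 1)).count a + ((l.drop (i + 1)).take ℓ).count a := by
    rw [Nat.add_right_comm, take_add, count_append]
  have h₁ := count_take_add_one_le l a i
  have h₂ := count_take_add_one_le l a (i + ℓ)
  have h₃ := (take_prefix_take_left (l := l) (Nat.le_add_right i 1)).count_le a
  have h₄ := (take_prefix_take_left (l := l) (Nat.le_add_right (i + ℓ) 1)).count_le a
  omega

end List

section FactorOnesCounts

variable (S : List Bool) (ℓ : ℕ)

theorem mem_factorOnesCounts_iff {k : ℕ} :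
    k ∈ factorOnesCounts S ℓ ↔
      ∃ i, i + ℓ ≤ S.length ∧ ((S.drop i).take ℓ).count true = k := by
  constructor
  · rintro ⟨w, hw, rfl, rfl⟩
    obtain ⟨i, hi, hwi⟩ := hw.exists_eq_take_drop_s4
    exact ⟨i, hi, by rw [hwi]⟩
  · rintro ⟨i, hi, rfl⟩
    exact ⟨_, S.take_drop_infix ℓ i, by simp only [List.length_take, List.length_drop, inf_eq_left]; omega, rfl⟩

theorem bddAbove_factorOnesCounts : BddAbove (factorOnesCounts S ℓ) :=
  ⟨ℓ, fun _ ⟨_, _, hw, hwk⟩ => hwk ▸ hw ▸ List.count_le_length⟩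

variable {S ℓ}

theorem factorOnesCounts_nonempty (h : ℓ ≤ S.length) : (factorOnesCounts S ℓ).Nonempty :=
  ⟨_, (mem_factorOnesCounts_iff S ℓ).2 ⟨0, by omega, rfl⟩⟩

theorem factorOnesCounts_eq_Icc (h : ℓ ≤ S.length) :
    factorOnesCounts S ℓ = Set.Icc (minOne S ℓ) (maxOne S ℓ) := by
  have hne := factorOnesCounts_nonempty h
  have hbdd := bddAbove_factorOnesCounts S ℓ
  refine Set.Subset.antisymm (fun k hk => ⟨Nat.sInf_le hk, le_csSup hbdd hk⟩) fun k hk => ?_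
  obtain ⟨i, hi, hfi⟩ := (mem_factorOnesCounts_iff S ℓ).1 (Nat.sInf_mem hne)
  obtain ⟨j, hj, hfj⟩ := (mem_factorOnesCounts_iff S ℓ).1 (Nat.sSup_mem hne hbdd)
  have hk' : k ∈ Set.uIcc (((S.drop i).take ℓ).count true) (((S.drop j).take ℓ).count true) := by
    rw [hfi, hfj]
    exact Set.Icc_subset_uIcc hk
  obtain ⟨m, hm, rfl⟩ := Nat.exists_eq_of_mem_uIcc_of_step_le_one
    (f := fun m => ((S.drop m).take ℓ).count true) (S.count_take_drop_step true ℓ) hk'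
  rw [Set.mem_uIcc] at hm
  exact (mem_factorOnesCounts_iff S ℓ).2 ⟨m, by omega, rfl⟩

end FactorOnesCounts

theorem hasCommonAbelianFactor_iff_nonempty_inter (A B : List Bool) (ℓ : ℕ) :
    HasCommonAbelianFactor A B ℓ ↔ (factorOnesCounts A ℓ ∩ factorOnesCounts B ℓ).Nonempty := by
  constructor
  · rintro ⟨u, v, hu, hv, hul, hvl, huv⟩
    exact ⟨u.count true, ⟨u, hu, hul, rfl⟩, ⟨v, hv, hvl, (huv true).symm⟩⟩
  · rintro ⟨k, ⟨u, hu, hul, rfl⟩, ⟨v, hv, hvl, hvu⟩⟩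
    refine ⟨u, v, hu, hv, hul, hvl, ?_⟩
    have hu' := u.count_false_add_count_true
    have hv' := v.count_false_add_count_true
    rintro (_ | _) <;> omega

theorem hasCommonAbelianFactor_iff {A B : List Bool} {ℓ : ℕ}
    (hA : ℓ ≤ A.length) (hB : ℓ ≤ B.length) :
    HasCommonAbelianFactor A B ℓ ↔ minOne A ℓ ≤ maxOne B ℓ ∧ minOne B ℓ ≤ maxOne A ℓ := by
  have hA' := factorOnesCounts_nonempty hA
  have hB' := factorOnesCounts_nonempty hB
  rw [factorOnesCounts_eq_Icc hA, Set.nonempty_Icc] at hA'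
  rw [factorOnesCounts_eq_Icc hB, Set.nonempty_Icc] at hB'
  rw [hasCommonAbelianFactor_iff_nonempty_inter, factorOnesCounts_eq_Icc hA,
    factorOnesCounts_eq_Icc hB, Set.Icc_inter_Icc, Set.nonempty_Icc, sup_le_iff, le_inf_iff,
    le_inf_iff]
  omega

theorem lcaf_eq_greatest_overlap_general (n : ℕ) (A B : List Bool)
    (hA : A.length = n) (hB : B.length = n) :
    sSup {ℓ : ℕ | 1 ≤ ℓ ∧ ℓ ≤ n ∧ HasCommonAbelianFactor A B ℓ} =
      sSup {ℓ : ℕ | 1 ≤ ℓ ∧ ℓ ≤ n ∧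
        maxOne B ℓ ≥ minOne A ℓ ∧ maxOne A ℓ ≥ minOne B ℓ} := by
  congr 1
  ext ℓ
  simp only [Set.mem_ofPred_eq, ge_iff_le, and_congr_right_iff]
  intro _ hℓ
  exact hasCommonAbelianFactor_iff (hA ▸ hℓ) (hB ▸ hℓ)

/-- If binary strings `A`, `B` of length `n` have at least one common abelian
factor, then the LCAF length (the largest `ℓ` with `1 ≤ ℓ ≤ n` such that a common
abelian factor of length `ℓ` exists) equals the largest `ℓ` with `1 ≤ ℓ ≤ n` such
that the intervals `[minOne A ℓ, maxOne A ℓ]` and `[minOne B ℓ, maxOne B ℓ]`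
intersect, i.e. `maxOne B ℓ ≥ minOne A ℓ` and `maxOne A ℓ ≥ minOne B ℓ`. -/
theorem lcaf_eq_greatest_overlap (n : ℕ) (A B : List Bool)
    (hA : A.length = n) (hB : B.length = n)
    (hex : ∃ ℓ : ℕ, 1 ≤ ℓ ∧ ℓ ≤ n ∧ HasCommonAbelianFactor A B ℓ) :
    sSup {ℓ : ℕ | 1 ≤ ℓ ∧ ℓ ≤ n ∧ HasCommonAbelianFactor A B ℓ} =
      sSup {ℓ : ℕ | 1 ≤ ℓ ∧ ℓ ≤ n ∧
        maxOne B ℓ ≥ minOne A ℓ ∧ maxOne A ℓ ≥ minOne B ℓ} :=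
  lcaf_eq_greatest_overlap_general n A B hA hB
end
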